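/- arXiv:1505.00579 — 3 statements merged into one kernel-verified Lean document; each statement's English description precedes it below -/
import Mathlib

section
/- The hit-and-run kernel restricted to a line, H_a(x, A) = ∫_{L(x,a)} 1_A(y) ρ(y) dy / ∫_{L(x,a)} ρ(y) dy where L(x,a) = {x + sa ∈ K : s ∈ R}, is reversible with respect to π (the measure with density ρ), i.e., ∫_A H_a(x,B) ρ(x) dx = ∫_B H_a(x,A) ρ(x) dx for all measurable A, B ⊆ K. -/
/-!
Write `N_S(x) = ∫ 1_S ρ` for the integral of the density over the chord through `x`. Then
`H_a(x, B) ρ(x) = N_B(x) / N_K(x) · ρ(x)`, and `N_K` is constant along each chord. By Tonelli and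
translation invariance (`x ↦ x - r a`, then `r ↦ -r`), `∫ N_g · f = ∫ N_f · g` for all nonnegative
measurable `f, g`; taking `f = 1_A ρ / N_K` and `g = 1_B ρ` gives the symmetry. Everything is done
in `ℝ≥0∞`, so no integrability is needed; the way back to `ℝ` uses only `N_B ≤ N_K`.
-/

open MeasureTheory
open scoped ENNReal

/-- The hit-and-run kernel along the chord through `x` in direction `a`:
`H_a(x,A) = ∫_{L(x,a)} 1_A ρ dy / ∫_{L(x,a)} ρ dy`, chords parametrized by `r ∈ ℝ`. -/
noncomputable def hitAndRunKernel {d : ℕ} (K : Set (EuclideanSpace ℝ (Fin d)))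
    (ρ : EuclideanSpace ℝ (Fin d) → ℝ) (a : EuclideanSpace ℝ (Fin d))
    (x : EuclideanSpace ℝ (Fin d)) (A : Set (EuclideanSpace ℝ (Fin d))) : ℝ :=
  (∫ r in {r : ℝ | x + r • a ∈ K ∩ A}, ρ (x + r • a) ∂volume) /
    (∫ r in {r : ℝ | x + r • a ∈ K}, ρ (x + r • a) ∂volume)

section LineIntegral

variable {E : Type*} [NormedAddCommGroup E] [NormedSpace ℝ E] (a : E)

noncomputable def lineLIntegral (f : E → ℝ≥0∞) (x : E) : ℝ≥0∞ :=
  ∫⁻ r : ℝ, f (x + r • a)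

variable {a} {f g w : E → ℝ≥0∞}

theorem lineLIntegral_add_smul (f : E → ℝ≥0∞) (x : E) (s : ℝ) :
    lineLIntegral a f (x + s • a) = lineLIntegral a f x := by
  simp_rw [lineLIntegral, add_assoc, ← add_smul]
  exact lintegral_add_left_eq_self (fun r => f (x + r • a)) s

variable [MeasurableSpace E] [BorelSpace E]

theorem lineLIntegral_mul_of_forall_add_smul_eq (hw : ∀ x (s : ℝ), w (x + s • a) = w x)
    (hf : Measurable f) (x : E) :
    lineLIntegral a (fun y => w y * f y) x = w x * lineLIntegral a f x := by
  simp_rw [lineLIntegral, hw]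
  exact lintegral_const_mul _ (by fun_prop)

theorem setIntegral_line_eq_toReal_lineLIntegral {ρ : E → ℝ} {S : Set E} (hS : MeasurableSet S)
    (hρ : Measurable ρ) (hρS : ∀ y ∈ S, 0 ≤ ρ y) (x : E) :
    ∫ r in {r : ℝ | x + r • a ∈ S}, ρ (x + r • a) =
      (lineLIntegral a (S.indicator fun y => ENNReal.ofReal (ρ y)) x).toReal := by
  have hline : Measurable fun r : ℝ => x + r • a := by fun_prop
  have hchord : MeasurableSet {r : ℝ | x + r • a ∈ S} := hline hS
  rw [integral_eq_lintegral_of_nonneg_ae (ae_restrict_of_forall_mem hchord fun r hr => hρS _ hr)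
    (hρ.comp hline).aestronglyMeasurable, ← lintegral_indicator hchord]
  rfl

variable [SecondCountableTopology E]

theorem measurable_lineLIntegral (hf : Measurable f) : Measurable (lineLIntegral a f) :=
  Measurable.lintegral_prod_right' (f := fun p : E × ℝ => f (p.1 + p.2 • a)) (by fun_prop)

theorem lintegral_lineLIntegral_mul_comm (μ : Measure E) [SigmaFinite μ] [μ.IsAddRightInvariant]
    (hf : Measurable f) (hg : Measurable g) :
    ∫⁻ x, lineLIntegral a g x * f x ∂μ = ∫⁻ x, lineLIntegral a f x * g x ∂μ := by
  calc ∫⁻ x, lineLIntegral a g x * f x ∂μ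
      = ∫⁻ x, ∫⁻ r : ℝ, g (x + r • a) * f x ∂volume ∂μ := by
        refine lintegral_congr fun x => (lintegral_mul_const _ ?_).symm
        fun_prop
    _ = ∫⁻ r : ℝ, ∫⁻ x, g (x + r • a) * f x ∂μ ∂volume := lintegral_lintegral_swap (by fun_prop)
    _ = ∫⁻ r : ℝ, ∫⁻ x, g x * f (x - r • a) ∂μ ∂volume := by
        refine lintegral_congr fun r => ?_
        rw [← lintegral_sub_right_eq_self _ (r • a)]
        simp_rw [sub_add_cancel]
    _ = ∫⁻ x, ∫⁻ r : ℝ, g x * f (x - r • a) ∂volume ∂μ :=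
        (lintegral_lintegral_swap (by fun_prop)).symm
    _ = ∫⁻ x, lineLIntegral a f x * g x ∂μ := by
        refine lintegral_congr fun x => ?_
        rw [lintegral_const_mul _ (by fun_prop), mul_comm, lineLIntegral,
          ← lintegral_neg_eq_self]
        simp_rw [neg_smul, sub_neg_eq_add]

theorem lintegral_lineLIntegral_mul_weight_comm (μ : Measure E) [SigmaFinite μ]
    [μ.IsAddRightInvariant] (hw : ∀ x (s : ℝ), w (x + s • a) = w x) (hw_meas : Measurable w)
    (hf : Measurable f) (hg : Measurable g) :
    ∫⁻ x, lineLIntegral a g x * (w x * f x) ∂μ = ∫⁻ x, lineLIntegral a f x * (w x * g x) ∂μ := by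
  rw [lintegral_lineLIntegral_mul_comm (f := fun x => w x * f x) μ (hw_meas.mul hf) hg]
  refine lintegral_congr fun x => ?_
  rw [lineLIntegral_mul_of_forall_add_smul_eq hw hf]
  ring

end LineIntegral

section HitAndRun

variable {d : ℕ} {K S T : Set (EuclideanSpace ℝ (Fin d))} {ρ : EuclideanSpace ℝ (Fin d) → ℝ}
  {a : EuclideanSpace ℝ (Fin d)}

local notation "mass" S => lineLIntegral a (Set.indicator S fun y => ENNReal.ofReal (ρ y))

theorem hitAndRunKernel_eq_toReal_div (hK : MeasurableSet K) (hT : MeasurableSet T) (hTK : T ⊆ K)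
    (hρ : Measurable ρ) (hρK : ∀ y ∈ K, 0 ≤ ρ y) (x : EuclideanSpace ℝ (Fin d)) :
    hitAndRunKernel K ρ a x T = ((mass T) x / (mass K) x).toReal := by
  rw [hitAndRunKernel, Set.inter_eq_right.mpr hTK,
    setIntegral_line_eq_toReal_lineLIntegral hT hρ fun y hy => hρK y (hTK hy),
    setIntegral_line_eq_toReal_lineLIntegral hK hρ hρK, ENNReal.toReal_div]

theorem setIntegral_hitAndRunKernel_mul_eq (hK : MeasurableSet K) (hS : MeasurableSet S)
    (hT : MeasurableSet T) (hSK : S ⊆ K) (hTK : T ⊆ K) (hρ : Measurable ρ)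
    (hρK : ∀ y ∈ K, 0 ≤ ρ y) :
    ∫ x in S, hitAndRunKernel K ρ a x T * ρ x =
      (∫⁻ x, (mass T) x * (((mass K) x)⁻¹ *
        S.indicator (fun y => ENNReal.ofReal (ρ y)) x)).toReal := by
  have hmass : ∀ {U}, MeasurableSet U → Measurable (mass U) := fun hU =>
    measurable_lineLIntegral (hρ.ennreal_ofReal.indicator hU)
  have hratio_le : ∀ x, (mass T) x / (mass K) x ≤ 1 := fun x =>
    ENNReal.div_le_of_le_mul <| (one_mul ((mass K) x)).symm ▸
      lintegral_mono fun r => Set.indicator_le_indicator_of_subset hTK (fun _ => zero_le) _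
  calc ∫ x in S, hitAndRunKernel K ρ a x T * ρ x
      = ∫ x in S, ((mass T) x / (mass K) x * ENNReal.ofReal (ρ x)).toReal :=
        setIntegral_congr_fun hS fun x hx => by
          rw [hitAndRunKernel_eq_toReal_div hK hT hTK hρ hρK, ENNReal.toReal_mul,
            ENNReal.toReal_ofReal (hρK x (hSK hx))]
    _ = (∫⁻ x in S, (mass T) x / (mass K) x * ENNReal.ofReal (ρ x)).toReal :=
        integral_toReal (((hmass hT).div (hmass hK)).mul hρ.ennreal_ofReal).aemeasurable
          (ae_of_all _ fun x => ENNReal.mul_lt_top ((hratio_le x).trans_lt ENNReal.one_lt_top)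
            ENNReal.ofReal_lt_top)
    _ = _ := by
        rw [← lintegral_indicator hS]
        simp_rw [Set.indicator_mul_right, div_eq_mul_inv, mul_assoc]

end HitAndRun

theorem hitAndRun_line_kernel_reversible_general {d : ℕ}
    (K : Set (EuclideanSpace ℝ (Fin d))) (hK : MeasurableSet K)
    (ρ : EuclideanSpace ℝ (Fin d) → ℝ) (hρ_meas : Measurable ρ)
    (hρ_pos : ∀ x ∈ K, 0 < ρ x)
    (a : EuclideanSpace ℝ (Fin d))
    (A B : Set (EuclideanSpace ℝ (Fin d))) (hA : MeasurableSet A) (hB : MeasurableSet B)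
    (hAK : A ⊆ K) (hBK : B ⊆ K) :
    ∫ x in A, hitAndRunKernel K ρ a x B * ρ x ∂volume
      = ∫ x in B, hitAndRunKernel K ρ a x A * ρ x ∂volume := by
  have hρK : ∀ y ∈ K, 0 ≤ ρ y := fun y hy => (hρ_pos y hy).le
  have hdensity : ∀ {S}, MeasurableSet S → Measurable (S.indicator fun y => ENNReal.ofReal (ρ y)) :=
    fun hS => hρ_meas.ennreal_ofReal.indicator hS
  rw [setIntegral_hitAndRunKernel_mul_eq hK hA hB hAK hBK hρ_meas hρK,
    setIntegral_hitAndRunKernel_mul_eq hK hB hA hBK hAK hρ_meas hρK]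
  exact congrArg ENNReal.toReal <| lintegral_lineLIntegral_mul_weight_comm volume
    (fun x s => by rw [lineLIntegral_add_smul]) (measurable_lineLIntegral (hdensity hK)).inv
    (hdensity hA) (hdensity hB)

/-- the line-restricted hit-and-run kernel `H_a` is reversible with respect
to the measure with density `ρ`: for all measurable `A, B ⊆ K`,
`∫_A H_a(x,B) ρ(x) dx = ∫_B H_a(x,A) ρ(x) dx`. -/
theorem hitAndRun_line_kernel_reversible {d : ℕ}
    (K : Set (EuclideanSpace ℝ (Fin d))) (hK : MeasurableSet K)
    (ρ : EuclideanSpace ℝ (Fin d) → ℝ) (hρ_meas : Measurable ρ)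
    (hρ_pos : ∀ x ∈ K, 0 < ρ x) (hρ_int : IntegrableOn ρ K)
    (a : EuclideanSpace ℝ (Fin d)) (ha : ‖a‖ = 1)
    (A B : Set (EuclideanSpace ℝ (Fin d))) (hA : MeasurableSet A) (hB : MeasurableSet B)
    (hAK : A ⊆ K) (hBK : B ⊆ K) :
    ∫ x in A, hitAndRunKernel K ρ a x B * ρ x ∂volume
      = ∫ x in B, hitAndRunKernel K ρ a x A * ρ x ∂volume :=
  hitAndRun_line_kernel_reversible_general K hK ρ hρ_meas hρ_pos a A B hA hB hAK hBK
end

section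
/- The line-restricted hybrid slice sampling kernel U_a(x,A) = (1/ρ(x)) ∫_0^{ρ(x)} |L_t(x,a) ∩ A| / |L_t(x,a)| dt, where L_t(x,a) = {x + ra ∈ K(t) : r ∈ R} and |·| denotes 1-dimensional Lebesgue measure, is reversible with respect to π: ∫_A U_a(x,B) ρ(x) dx = ∫_B U_a(x,A) ρ(x) dx for all measurable A, B ⊆ K. -/
open MeasureTheory
open scoped ENNReal

variable {d : ℕ}
local notation "E" => EuclideanSpace ℝ (Fin d)

noncomputable def lineVol (S : Set (EuclideanSpace ℝ (Fin d))) (ρ : EuclideanSpace ℝ (Fin d) → ℝ)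
    (a x : EuclideanSpace ℝ (Fin d)) (t : ℝ) : ℝ≥0∞ :=
  volume {r : ℝ | x + r • a ∈ S ∧ t < ρ (x + r • a)}

lemma lineVol_shift (S : Set E) (ρ : E → ℝ) (a x : E) (t s : ℝ) :
    lineVol S ρ a (x + s • a) t = lineVol S ρ a x t := by
  unfold lineVol
  have hset : {r : ℝ | x + s • a + r • a ∈ S ∧ t < ρ (x + s • a + r • a)}
      = (fun r => s + r) ⁻¹' {r : ℝ | x + r • a ∈ S ∧ t < ρ (x + r • a)} := by
    ext r
    simp [Set.mem_preimage, Set.mem_setOf_eq, add_smul, add_assoc]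
  rw [hset, measure_preimage_add]

lemma lineVol_mono {S T : Set E} (h : S ⊆ T) (ρ : E → ℝ) (a x : E) (t : ℝ) :
    lineVol S ρ a x t ≤ lineVol T ρ a x t :=
  measure_mono (fun r hr => ⟨h hr.1, hr.2⟩)

lemma ofReal_toReal_div {p q : ℝ≥0∞} (h : p ≤ q) :
    ENNReal.ofReal (p.toReal / q.toReal) = p / q := by
  rw [← ENNReal.toReal_div, ENNReal.ofReal_toReal]
  exact ((ENNReal.div_le_of_le_mul (by simpa using h)).trans_lt ENNReal.one_lt_top).ne

lemma div_lineVol_le_one {p q : ℝ≥0∞} (h : p ≤ q) : p / q ≤ 1 :=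
  ENNReal.div_le_of_le_mul (by simpa using h)

lemma measurableSet_lineCond {S : Set E} (hS : MeasurableSet S) {ρ : E → ℝ}
    (hρ : Measurable ρ) (a : E) :
    MeasurableSet {q : (EuclideanSpace ℝ (Fin d) × ℝ) × ℝ |
      q.1.1 + q.2 • a ∈ S ∧ q.1.2 < ρ (q.1.1 + q.2 • a)} := by
  have hmap : Measurable fun q : (E × ℝ) × ℝ => q.1.1 + q.2 • a := by fun_prop
  exact (hmap hS).inter (measurableSet_lt (measurable_fst.snd) (hρ.comp hmap))

lemma lineVol_eq_lintegral {S : Set E} (hS : MeasurableSet S) {ρ : E → ℝ}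
    (hρ : Measurable ρ) (a x : E) (t : ℝ) :
    lineVol S ρ a x t
      = ∫⁻ r : ℝ, ({p : E × ℝ | p.1 ∈ S ∧ p.2 < ρ p.1}).indicator 1 (x + r • a, t) := by
  have hset : MeasurableSet {r : ℝ | x + r • a ∈ S ∧ t < ρ (x + r • a)} := by
    have hmap : Measurable fun r : ℝ => x + r • a := by fun_prop
    exact (hmap hS).inter (measurableSet_lt measurable_const (hρ.comp hmap))
  rw [lineVol, ← lintegral_indicator_one hset]
  refine lintegral_congr fun r => ?_
  by_cases hr : x + r • a ∈ S ∧ t < ρ (x + r • a) <;>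
    simp [Set.indicator_apply, Set.mem_setOf_eq, hr]


lemma measurable_lineVol {S : Set E} (hS : MeasurableSet S) {ρ : E → ℝ}
    (hρ : Measurable ρ) (a : E) :
    Measurable fun p : EuclideanSpace ℝ (Fin d) × ℝ => lineVol S ρ a p.1 p.2 := by
  have hset := measurableSet_lineCond hS hρ a
  have h1 : Measurable fun q : (E × ℝ) × ℝ =>
      ({q : (E × ℝ) × ℝ | q.1.1 + q.2 • a ∈ S ∧ q.1.2 < ρ (q.1.1 + q.2 • a)}).indicator 1 q :=
    (measurable_one : Measurable (1 : ((E × ℝ) × ℝ) → ℝ≥0∞)).indicator hset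
  have h2 : Measurable fun p : E × ℝ => ∫⁻ r : ℝ,
      ({q : (E × ℝ) × ℝ | q.1.1 + q.2 • a ∈ S ∧ q.1.2 < ρ (q.1.1 + q.2 • a)}).indicator 1 (p, r) :=
    Measurable.lintegral_prod_right (f := fun (p : E × ℝ) (r : ℝ) =>
      ({q : (E × ℝ) × ℝ | q.1.1 + q.2 • a ∈ S ∧ q.1.2 < ρ (q.1.1 + q.2 • a)}).indicator 1 (p, r)) h1
  have heq : (fun p : E × ℝ => lineVol S ρ a p.1 p.2)
      = fun p : E × ℝ => ∫⁻ r : ℝ,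
        ({q : (E × ℝ) × ℝ | q.1.1 + q.2 • a ∈ S ∧ q.1.2 < ρ (q.1.1 + q.2 • a)}).indicator 1 (p, r) := by
    funext p
    rw [lineVol_eq_lintegral hS hρ a p.1 p.2]
    refine lintegral_congr fun r => ?_
    by_cases h : p.1 + r • a ∈ S ∧ p.2 < ρ (p.1 + r • a) <;>
      simp [Set.indicator_apply, Set.mem_setOf_eq, h]
  rw [heq]
  exact h2

def SIoo (ρ : EuclideanSpace ℝ (Fin d) → ℝ) (A : Set (EuclideanSpace ℝ (Fin d))) :
    Set (EuclideanSpace ℝ (Fin d) × ℝ) :=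
  {p | p.1 ∈ A ∧ 0 < p.2 ∧ p.2 < ρ p.1}

def SLt (ρ : EuclideanSpace ℝ (Fin d) → ℝ) (S : Set (EuclideanSpace ℝ (Fin d))) :
    Set (EuclideanSpace ℝ (Fin d) × ℝ) :=
  {p | p.1 ∈ S ∧ p.2 < ρ p.1}

lemma measurableSet_SIoo {ρ : E → ℝ} (hρ : Measurable ρ) {A : Set E} (hA : MeasurableSet A) :
    MeasurableSet (SIoo ρ A) :=
  (measurable_fst hA).inter ((measurableSet_lt measurable_const measurable_snd).inter
    (measurableSet_lt measurable_snd (hρ.comp measurable_fst)))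

lemma measurableSet_SLt {ρ : E → ℝ} (hρ : Measurable ρ) {S : Set E} (hS : MeasurableSet S) :
    MeasurableSet (SLt ρ S) :=
  (measurable_fst hS).inter (measurableSet_lt measurable_snd (hρ.comp measurable_fst))

lemma lineVol_eq_lintegral' {S : Set E} (hS : MeasurableSet S) {ρ : E → ℝ}
    (hρ : Measurable ρ) (a x : E) (t : ℝ) :
    lineVol S ρ a x t = ∫⁻ r : ℝ, (SLt ρ S).indicator 1 (x + r • a, t) :=
  lineVol_eq_lintegral hS hρ a x t

noncomputable def Phi (K : Set (EuclideanSpace ℝ (Fin d))) (ρ : EuclideanSpace ℝ (Fin d) → ℝ)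
    (a : EuclideanSpace ℝ (Fin d)) (A B : Set (EuclideanSpace ℝ (Fin d)))
    (x : EuclideanSpace ℝ (Fin d)) (t r : ℝ) : ℝ≥0∞ :=
  (SIoo ρ A).indicator 1 (x, t) * (SLt ρ (K ∩ B)).indicator 1 (x + r • a, t)
    / lineVol K ρ a x t

lemma measurable_Phi {K : Set E} (hK : MeasurableSet K) {ρ : E → ℝ} (hρ : Measurable ρ)
    (a : E) {A B : Set E} (hA : MeasurableSet A) (hB : MeasurableSet B) :
    Measurable fun q : (EuclideanSpace ℝ (Fin d) × ℝ) × ℝ => Phi K ρ a A B q.1.1 q.1.2 q.2 := by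
  have hmap : Measurable fun q : (E × ℝ) × ℝ => (q.1.1 + q.2 • a, q.1.2) := by fun_prop
  have m1 : Measurable fun q : (E × ℝ) × ℝ => (SIoo ρ A).indicator 1 q.1 :=
    ((measurable_one : Measurable (1 : (E × ℝ) → ℝ≥0∞)).indicator
      (measurableSet_SIoo hρ hA)).comp measurable_fst
  have m2 : Measurable fun q : (E × ℝ) × ℝ => (SLt ρ (K ∩ B)).indicator 1 (q.1.1 + q.2 • a, q.1.2) :=
    ((measurable_one : Measurable (1 : (E × ℝ) → ℝ≥0∞)).indicator
      (measurableSet_SLt hρ (hK.inter hB))).comp hmap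
  have m3 : Measurable fun q : (E × ℝ) × ℝ => lineVol K ρ a q.1.1 q.1.2 :=
    (measurable_lineVol hK hρ a).comp measurable_fst
  exact (m1.mul m2).div m3

lemma indicator_mul_indicator_comm {K : Set E} {ρ : E → ℝ} {A B : Set E}
    (hAK : A ⊆ K) (hBK : B ⊆ K) (a x : E) (t r : ℝ) :
    (SIoo ρ A).indicator 1 (x + r • a, t) * (SLt ρ (K ∩ B)).indicator 1 (x, t)
      = (SIoo ρ B).indicator 1 (x, t) * (SLt ρ (K ∩ A)).indicator (1 : (E × ℝ) → ℝ≥0∞) (x + r • a, t) := by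
  classical
  simp only [SIoo, SLt, Set.indicator_apply, Set.mem_setOf_eq, Set.mem_inter_iff, Pi.one_apply,
    ite_zero_mul_ite_zero, mul_one]
  refine if_congr ?_ rfl rfl
  constructor
  · rintro ⟨⟨h1, h2, h3⟩, ⟨h4, h5⟩, h6⟩
    exact ⟨⟨h5, h2, h6⟩, ⟨hAK h1, h1⟩, h3⟩
  · rintro ⟨⟨h1, h2, h3⟩, ⟨h4, h5⟩, h6⟩
    exact ⟨⟨h5, h2, h6⟩, ⟨hBK h1, h1⟩, h3⟩

lemma T_symm {K : Set E} (hK : MeasurableSet K) {ρ : E → ℝ} (hρ : Measurable ρ)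
    (a : E) {A B : Set E} (hA : MeasurableSet A) (hB : MeasurableSet B)
    (hAK : A ⊆ K) (hBK : B ⊆ K) :
    ∫⁻ t : ℝ, ∫⁻ r : ℝ, ∫⁻ x : EuclideanSpace ℝ (Fin d), Phi K ρ a A B x t r
      = ∫⁻ t : ℝ, ∫⁻ r : ℝ, ∫⁻ x : EuclideanSpace ℝ (Fin d), Phi K ρ a B A x t r := by
  refine lintegral_congr fun t => ?_
  set Ψ : ℝ → ℝ≥0∞ := fun s => ∫⁻ x : E,
    (SIoo ρ A).indicator 1 (x + s • a, t) * (SLt ρ (K ∩ B)).indicator 1 (x, t)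
      / lineVol K ρ a x t with hΨ
  have hstep : ∀ r : ℝ, (∫⁻ x : E, Phi K ρ a A B x t r) = Ψ (-r) := by
    intro r
    have h0 := lintegral_add_right_eq_self (μ := (volume : Measure E))
      (fun x => Phi K ρ a A B x t r) ((-r) • a)
    rw [← h0, hΨ]
    refine lintegral_congr fun x => ?_
    have hx : x + (-r) • a + r • a = x := by
      rw [add_assoc, ← add_smul, neg_add_cancel, zero_smul, add_zero]
    rw [Phi, hx, lineVol_shift, neg_smul, ← neg_smul]
  have hΨmeas : Measurable Ψ := by
    have hmap : Measurable fun q : ℝ × E => (q.2 + q.1 • a, t) := by fun_prop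
    have m1 : Measurable fun q : ℝ × E => (SIoo ρ A).indicator 1 (q.2 + q.1 • a, t) :=
      ((measurable_one : Measurable (1 : (E × ℝ) → ℝ≥0∞)).indicator
        (measurableSet_SIoo hρ hA)).comp hmap
    have m2 : Measurable fun q : ℝ × E => (SLt ρ (K ∩ B)).indicator 1 (q.2, t) :=
      ((measurable_one : Measurable (1 : (E × ℝ) → ℝ≥0∞)).indicator
        (measurableSet_SLt hρ (hK.inter hB))).comp (by fun_prop)
    have m3 : Measurable fun q : ℝ × E => lineVol K ρ a q.2 t :=
      (measurable_lineVol hK hρ a).comp (measurable_snd.prodMk measurable_const)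
    exact Measurable.lintegral_prod_right (f := fun (s : ℝ) (x : E) =>
      (SIoo ρ A).indicator 1 (x + s • a, t) * (SLt ρ (K ∩ B)).indicator 1 (x, t)
        / lineVol K ρ a x t) ((m1.mul m2).div m3)
  have hneg : (∫⁻ r : ℝ, Ψ (-r)) = ∫⁻ r : ℝ, Ψ r :=
    (Measure.measurePreserving_neg (volume : Measure ℝ)).lintegral_comp hΨmeas
  calc ∫⁻ r : ℝ, ∫⁻ x : E, Phi K ρ a A B x t r
      = ∫⁻ r : ℝ, Ψ (-r) := lintegral_congr hstep
    _ = ∫⁻ r : ℝ, Ψ r := hneg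
    _ = ∫⁻ r : ℝ, ∫⁻ x : E, Phi K ρ a B A x t r := by
        refine lintegral_congr fun r => lintegral_congr fun x => ?_
        unfold Phi
        rw [indicator_mul_indicator_comm hAK hBK a x t r]

lemma core_eq {K : Set E} (hK : MeasurableSet K) {ρ : E → ℝ} (hρ : Measurable ρ)
    (a : E) {A B : Set E} (hA : MeasurableSet A) (hB : MeasurableSet B) :
    ∫⁻ x in A, ∫⁻ t in Set.Ioo 0 (ρ x),
        lineVol (K ∩ B) ρ a x t / lineVol K ρ a x t ∂volume ∂volume
      = ∫⁻ t : ℝ, ∫⁻ r : ℝ, ∫⁻ x : EuclideanSpace ℝ (Fin d), Phi K ρ a A B x t r := by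
  have s1 : (∫⁻ x in A, ∫⁻ t in Set.Ioo 0 (ρ x),
        lineVol (K ∩ B) ρ a x t / lineVol K ρ a x t ∂volume ∂volume)
      = ∫⁻ x : E, ∫⁻ t : ℝ, (SIoo ρ A).indicator 1 (x, t)
          * (lineVol (K ∩ B) ρ a x t / lineVol K ρ a x t) := by
    rw [← lintegral_indicator hA]
    refine lintegral_congr fun x => ?_
    by_cases hx : x ∈ A
    · rw [Set.indicator_of_mem hx, ← lintegral_indicator measurableSet_Ioo]
      refine lintegral_congr fun t => ?_
      by_cases ht : t ∈ Set.Ioo 0 (ρ x)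
      · rw [Set.indicator_of_mem ht,
          Set.indicator_of_mem (show (x, t) ∈ SIoo ρ A from ⟨hx, ht.1, ht.2⟩),
          Pi.one_apply, one_mul]
      · rw [Set.indicator_of_notMem ht,
          Set.indicator_of_notMem (fun h : (x, t) ∈ SIoo ρ A => ht ⟨h.2.1, h.2.2⟩), zero_mul]
    · rw [Set.indicator_of_notMem hx]
      symm
      have hz : ∀ t : ℝ, (SIoo ρ A).indicator (1 : (E × ℝ) → ℝ≥0∞) (x, t)
          * (lineVol (K ∩ B) ρ a x t / lineVol K ρ a x t) = 0 := fun t => by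
        rw [Set.indicator_of_notMem (fun h : (x, t) ∈ SIoo ρ A => hx h.1), zero_mul]
      simp only [hz, lintegral_zero]
  have s2 : ∀ (x : E) (t : ℝ), (SIoo ρ A).indicator 1 (x, t)
        * (lineVol (K ∩ B) ρ a x t / lineVol K ρ a x t)
      = ∫⁻ r : ℝ, Phi K ρ a A B x t r := by
    intro x t
    rw [lineVol_eq_lintegral' (hK.inter hB) hρ a x t]
    have hf : Measurable fun r : ℝ =>
        (SLt ρ (K ∩ B)).indicator (1 : (E × ℝ) → ℝ≥0∞) (x + r • a, t) :=
      ((measurable_one : Measurable (1 : (E × ℝ) → ℝ≥0∞)).indicator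
        (measurableSet_SLt hρ (hK.inter hB))).comp (by fun_prop)
    rw [show (SIoo ρ A).indicator (1 : (E × ℝ) → ℝ≥0∞) (x, t)
        * ((∫⁻ r : ℝ, (SLt ρ (K ∩ B)).indicator 1 (x + r • a, t)) / lineVol K ρ a x t)
        = ((SIoo ρ A).indicator 1 (x, t) / lineVol K ρ a x t)
          * ∫⁻ r : ℝ, (SLt ρ (K ∩ B)).indicator 1 (x + r • a, t) from by
      simp only [div_eq_mul_inv]; ring]
    rw [← lintegral_const_mul _ hf]
    refine lintegral_congr fun r => ?_
    unfold Phi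
    simp only [div_eq_mul_inv]; ring
  rw [s1]
  have s2' : (∫⁻ x : E, ∫⁻ t : ℝ, (SIoo ρ A).indicator 1 (x, t)
        * (lineVol (K ∩ B) ρ a x t / lineVol K ρ a x t))
      = ∫⁻ x : E, ∫⁻ t : ℝ, ∫⁻ r : ℝ, Phi K ρ a A B x t r :=
    lintegral_congr fun x => lintegral_congr fun t => s2 x t
  rw [s2']
  have mPhi := measurable_Phi hK hρ a hA hB
  have swap1 : (∫⁻ x : E, ∫⁻ t : ℝ, ∫⁻ r : ℝ, Phi K ρ a A B x t r)
      = ∫⁻ t : ℝ, ∫⁻ x : E, ∫⁻ r : ℝ, Phi K ρ a A B x t r := by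
    refine lintegral_lintegral_swap ?_
    have hm : Measurable fun p : E × ℝ => ∫⁻ r : ℝ, Phi K ρ a A B p.1 p.2 r :=
      Measurable.lintegral_prod_right
        (f := fun (p : E × ℝ) (r : ℝ) => Phi K ρ a A B p.1 p.2 r) mPhi
    exact hm.aemeasurable
  rw [swap1]
  refine lintegral_congr fun t => ?_
  refine lintegral_lintegral_swap ?_
  have hm : Measurable fun q : E × ℝ => Phi K ρ a A B q.1 t q.2 :=
    mPhi.comp ((measurable_fst.prodMk measurable_const).prodMk measurable_snd)
  exact hm.aemeasurable

lemma measurable_J {K : Set E} (hK : MeasurableSet K) {ρ : E → ℝ} (hρ : Measurable ρ)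
    (a : E) {B : Set E} (hB : MeasurableSet B) :
    Measurable fun x : EuclideanSpace ℝ (Fin d) => ∫⁻ t in Set.Ioo 0 (ρ x),
      lineVol (K ∩ B) ρ a x t / lineVol K ρ a x t ∂volume := by
  have hW : MeasurableSet {p : E × ℝ | 0 < p.2 ∧ p.2 < ρ p.1} :=
    (measurableSet_lt measurable_const measurable_snd).inter
      (measurableSet_lt measurable_snd (hρ.comp measurable_fst))
  have hq : Measurable fun p : E × ℝ => lineVol (K ∩ B) ρ a p.1 p.2 / lineVol K ρ a p.1 p.2 :=
    (measurable_lineVol (hK.inter hB) hρ a).div (measurable_lineVol hK hρ a)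
  have heq : (fun x : E => ∫⁻ t in Set.Ioo 0 (ρ x),
        lineVol (K ∩ B) ρ a x t / lineVol K ρ a x t ∂volume)
      = fun x : E => ∫⁻ t : ℝ, ({p : E × ℝ | 0 < p.2 ∧ p.2 < ρ p.1}.indicator
          (fun p => lineVol (K ∩ B) ρ a p.1 p.2 / lineVol K ρ a p.1 p.2)) (x, t) := by
    funext x
    rw [← lintegral_indicator measurableSet_Ioo]
    refine lintegral_congr fun t => ?_
    by_cases ht : t ∈ Set.Ioo 0 (ρ x)
    · rw [Set.indicator_of_mem ht,
        Set.indicator_of_mem (show ((x, t) : E × ℝ) ∈ {p : E × ℝ | 0 < p.2 ∧ p.2 < ρ p.1}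
          from ⟨ht.1, ht.2⟩)]
    · rw [Set.indicator_of_notMem ht,
        Set.indicator_of_notMem
          (fun h : ((x, t) : E × ℝ) ∈ {p : E × ℝ | 0 < p.2 ∧ p.2 < ρ p.1} => ht ⟨h.1, h.2⟩)]
  rw [heq]
  exact Measurable.lintegral_prod_right
    (f := fun (x : E) (t : ℝ) => ({p : E × ℝ | 0 < p.2 ∧ p.2 < ρ p.1}.indicator
      (fun p => lineVol (K ∩ B) ρ a p.1 p.2 / lineVol K ρ a p.1 p.2)) (x, t))
    (hq.indicator hW)

/-- The line-restricted hybrid slice sampling kernel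
`U_a(x,A) = (1/ρ(x)) ∫_0^{ρ(x)} |L_t(x,a) ∩ A| / |L_t(x,a)| dt`, where
`L_t(x,a) = {x + ra ∈ K(t) : r ∈ ℝ}` (parametrized by `r ∈ ℝ`) and `|·|` is
the 1-dimensional Lebesgue measure. -/
noncomputable def hybridSliceLineKernel {d : ℕ} (K : Set (EuclideanSpace ℝ (Fin d)))
    (ρ : EuclideanSpace ℝ (Fin d) → ℝ) (a : EuclideanSpace ℝ (Fin d))
    (x : EuclideanSpace ℝ (Fin d)) (A : Set (EuclideanSpace ℝ (Fin d))) : ℝ :=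
  (1 / ρ x) * ∫ t in Set.Ioo 0 (ρ x),
    (volume {r : ℝ | x + r • a ∈ K ∩ A ∧ t < ρ (x + r • a)}).toReal /
      (volume {r : ℝ | x + r • a ∈ K ∧ t < ρ (x + r • a)}).toReal ∂volume

lemma half {K : Set E} (hK : MeasurableSet K) {ρ : E → ℝ} (hρ : Measurable ρ)
    (hρ_pos : ∀ x ∈ K, 0 < ρ x) (a : E) {A B : Set E}
    (hA : MeasurableSet A) (hB : MeasurableSet B) (hAK : A ⊆ K) :
    ∫ x in A, hybridSliceLineKernel K ρ a x B * ρ x ∂volume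
      = (∫⁻ x in A, ∫⁻ t in Set.Ioo 0 (ρ x),
          lineVol (K ∩ B) ρ a x t / lineVol K ρ a x t ∂volume ∂volume).toReal := by
  have hle : ∀ (x : E) (t : ℝ), lineVol (K ∩ B) ρ a x t / lineVol K ρ a x t ≤ 1 :=
    fun x t => div_lineVol_le_one (lineVol_mono Set.inter_subset_left ρ a x t)
  have key : ∀ x ∈ A, hybridSliceLineKernel K ρ a x B * ρ x
      = (∫⁻ t in Set.Ioo 0 (ρ x), lineVol (K ∩ B) ρ a x t / lineVol K ρ a x t ∂volume).toReal := by
    intro x hx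
    have hx0 : 0 < ρ x := hρ_pos x (hAK hx)
    have h1 : hybridSliceLineKernel K ρ a x B
        = (1 / ρ x) * ∫ t in Set.Ioo 0 (ρ x),
            ((lineVol (K ∩ B) ρ a x t / lineVol K ρ a x t).toReal) ∂volume := by
      unfold hybridSliceLineKernel lineVol
      simp only [ENNReal.toReal_div]
    have h2 : (∫ t in Set.Ioo 0 (ρ x),
          ((lineVol (K ∩ B) ρ a x t / lineVol K ρ a x t).toReal) ∂volume)
        = (∫⁻ t in Set.Ioo 0 (ρ x), lineVol (K ∩ B) ρ a x t / lineVol K ρ a x t ∂volume).toReal := by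
      refine integral_toReal ?_ ?_
      · exact (((measurable_lineVol (hK.inter hB) hρ a).div (measurable_lineVol hK hρ a)).comp
          (measurable_const.prodMk measurable_id)).aemeasurable
      · exact Filter.Eventually.of_forall fun t => (hle x t).trans_lt ENNReal.one_lt_top
    rw [h1, h2]
    field_simp
  rw [setIntegral_congr_fun hA key]
  refine integral_toReal ?_ ?_
  · exact (measurable_J hK hρ a hB).aemeasurable
  · refine Filter.Eventually.of_forall fun x => ?_
    calc (∫⁻ t in Set.Ioo 0 (ρ x), lineVol (K ∩ B) ρ a x t / lineVol K ρ a x t ∂volume)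
        ≤ ∫⁻ t in Set.Ioo 0 (ρ x), 1 ∂volume := lintegral_mono fun t => hle x t
      _ = volume (Set.Ioo 0 (ρ x)) := setLIntegral_one _
      _ < ⊤ := by rw [Real.volume_Ioo]; exact ENNReal.ofReal_lt_top

/-- the line-restricted hybrid slice sampling kernel `U_a` is reversible
with respect to the measure with density `ρ`: for all measurable `A, B ⊆ K`,
`∫_A U_a(x,B) ρ(x) dx = ∫_B U_a(x,A) ρ(x) dx`. -/
theorem hybridSlice_line_kernel_reversible {d : ℕ}
    (K : Set (EuclideanSpace ℝ (Fin d))) (hK : MeasurableSet K)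
    (ρ : EuclideanSpace ℝ (Fin d) → ℝ) (hρ_meas : Measurable ρ)
    (hρ_pos : ∀ x ∈ K, 0 < ρ x) (hρ_int : IntegrableOn ρ K)
    (a : EuclideanSpace ℝ (Fin d)) (ha : ‖a‖ = 1)
    (A B : Set (EuclideanSpace ℝ (Fin d))) (hA : MeasurableSet A) (hB : MeasurableSet B)
    (hAK : A ⊆ K) (hBK : B ⊆ K) :
    ∫ x in A, hybridSliceLineKernel K ρ a x B * ρ x ∂volume
      = ∫ x in B, hybridSliceLineKernel K ρ a x A * ρ x ∂volume := by
  rw [half hK hρ_meas hρ_pos a hA hB hAK, half hK hρ_meas hρ_pos a hB hA hBK]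
  exact congrArg ENNReal.toReal
    (((core_eq hK hρ_meas a hA hB).trans (T_symm hK hρ_meas a hA hB hAK hBK)).trans
      (core_eq hK hρ_meas a hB hA).symm)
end

section
/- The line-restricted Metropolis kernel M_a is reversible with respect to the uniform distribution π_a on K(a_2): for all measurable A, B ⊆ K, ∫_{A ∩ K(a_2)} M_a(x,B) dx = ∫_{B ∩ K(a_2)} M_a(x,A) dx. -/
open MeasureTheory
open scoped ENNReal

namespace LazyLineMetropolisReversible

variable {d : ℕ}

/-- `η(x,y) = (d κ_d / 2) q(y-x) |y-x|^{d-1}`. -/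
noncomputable def eta (d : ℕ) (q : EuclideanSpace ℝ (Fin d) → ℝ)
    (x y : EuclideanSpace ℝ (Fin d)) : ℝ :=
  (d * (volume (Metric.ball (0 : EuclideanSpace ℝ (Fin d)) 1)).toReal / 2) *
    q (y - x) * ‖y - x‖ ^ (d - 1)

/-- The lazy line-restricted Metropolis kernel on the chord
`[x]_a = L_{a₂}(x,a₁) = {x + r a₁ ∈ K(a₂) : r ∈ ℝ}` (parametrized by `r ∈ ℝ`):
`M_a(x,A) = (1/2) ∫_{[x]_a} 1_A(y) η(x,y) dy + 1_A(x)(1 - (1/2) ∫_{[x]_a} η(x,y) dy)`. -/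
noncomputable def lazyLineMetropolis (K : Set (EuclideanSpace ℝ (Fin d)))
    (ρ : EuclideanSpace ℝ (Fin d) → ℝ) (q : EuclideanSpace ℝ (Fin d) → ℝ)
    (a₁ : EuclideanSpace ℝ (Fin d)) (a₂ : ℝ)
    (x : EuclideanSpace ℝ (Fin d)) (A : Set (EuclideanSpace ℝ (Fin d))) : ℝ :=
  (1 / 2) * (∫ r in {r : ℝ | x + r • a₁ ∈ K ∧ a₂ < ρ (x + r • a₁) ∧ x + r • a₁ ∈ A},
      eta d q x (x + r • a₁) ∂volume) +
    A.indicator (fun _ =>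
      1 - (1 / 2) * ∫ r in {r : ℝ | x + r • a₁ ∈ K ∧ a₂ < ρ (x + r • a₁)},
        eta d q x (x + r • a₁) ∂volume) x

/-! The off-diagonal part of `M_a` is symmetric by Fubini: `∫_C (η-mass of the chord through x
that lands in D) dx = ∫_ℝ η(0, r a₁) |C ∩ (D - r a₁)| dr`, and translation invariance of Lebesgue
measure together with the evenness of `r ↦ η(0, r a₁)` (radial symmetry of `q`) exchanges `C` and
`D`. The diagonal part lives on `A ∩ B ∩ K(a₂)` and is symmetric outright. Everything is done in
`ℝ≥0∞`, where no integrability is needed; returning to `ℝ` only requires `1 - ½ ∫ η ≥ 0`, which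
holds because by polar coordinates the `η`-mass of a whole line is `∫ q = 1`. -/

open Set

section LineMass

variable {E : Type*} [NormedAddCommGroup E] [NormedSpace ℝ E]

noncomputable def lineMass (v : E) (f : ℝ → ℝ≥0∞) (D : Set E) (x : E) : ℝ≥0∞ :=
  ∫⁻ r in {r : ℝ | x + r • v ∈ D}, f r

theorem lineMass_le_lintegral (v : E) (f : ℝ → ℝ≥0∞) (D : Set E) (x : E) :
    lineMass v f D x ≤ ∫⁻ r, f r :=
  setLIntegral_le_lintegral _ _

/-- The `ℝ≥0∞`-valued counterpart of `lazyLineMetropolis`, with `S = K(a₂)`. Its subtraction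
truncates at `0`; this is invisible once the line mass is at most `2` (`toReal_lazyLineKernel`). -/
noncomputable def lazyLineKernel (v : E) (f : ℝ → ℝ≥0∞) (S C : Set E) (x : E) : ℝ≥0∞ :=
  2⁻¹ * lineMass v f (S ∩ C) x + C.indicator (fun y => 1 - 2⁻¹ * lineMass v f S y) x

theorem toReal_lineMass (v : E) {F : ℝ → ℝ} (hF : Measurable F) (hF_nonneg : ∀ r, 0 ≤ F r)
    (D : Set E) (x : E) :
    (lineMass v (fun r => ENNReal.ofReal (F r)) D x).toReal =
      ∫ r in {r : ℝ | x + r • v ∈ D}, F r :=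
  (integral_eq_lintegral_of_nonneg_ae (ae_of_all _ hF_nonneg) hF.aestronglyMeasurable).symm

theorem toReal_lazyLineKernel (v : E) {F : ℝ → ℝ} (hF : Measurable F) (hF_nonneg : ∀ r, 0 ≤ F r)
    (hF_mass : ∫⁻ r, ENNReal.ofReal (F r) ≤ 2) (S C : Set E) (x : E) :
    (lazyLineKernel v (fun r => ENNReal.ofReal (F r)) S C x).toReal =
      1 / 2 * (∫ r in {r : ℝ | x + r • v ∈ S ∩ C}, F r) +
        C.indicator (fun _ => 1 - 1 / 2 * ∫ r in {r : ℝ | x + r • v ∈ S}, F r) x := by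
  have half_mass_le_one : ∀ D y, 2⁻¹ * lineMass v (fun r => ENNReal.ofReal (F r)) D y ≤ 1 :=
    fun D y => calc
      _ ≤ 2⁻¹ * 2 := by gcongr; exact (lineMass_le_lintegral v _ D y).trans hF_mass
      _ = 1 := ENNReal.inv_mul_cancel two_ne_zero ENNReal.ofNat_ne_top
  have half_mass_ne_top D y := ((half_mass_le_one D y).trans_lt ENNReal.one_lt_top).ne
  simp only [lazyLineKernel]
  by_cases hx : x ∈ C
  · simp only [indicator_of_mem hx]
    rw [ENNReal.toReal_add (half_mass_ne_top _ _) (ENNReal.sub_ne_top ENNReal.one_ne_top),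
      ENNReal.toReal_sub_of_le (half_mass_le_one _ _) ENNReal.one_ne_top]
    simp [toReal_lineMass v hF hF_nonneg]
  · simp [hx, toReal_lineMass v hF hF_nonneg]

theorem lazyLineKernel_lt_top (v : E) {f : ℝ → ℝ≥0∞} (hf : ∫⁻ r, f r ≠ ∞) (S C : Set E)
    (x : E) :
    lazyLineKernel v f S C x < ∞ := by
  refine ENNReal.add_lt_top.2 ⟨ENNReal.mul_lt_top (by simp) ?_, ?_⟩
  · exact (lineMass_le_lintegral v f _ x).trans_lt hf.lt_top
  · exact (indicator_le (fun y _ => tsub_le_self) x).trans_lt ENNReal.one_lt_top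

variable [MeasurableSpace E] [BorelSpace E]

theorem lineMass_eq_lintegral_indicator (v : E) (f : ℝ → ℝ≥0∞) {D : Set E}
    (hD : MeasurableSet D) (x : E) : lineMass v f D x = ∫⁻ r, D.indicator 1 (x + r • v) * f r := by
  have hmeas : MeasurableSet {r : ℝ | x + r • v ∈ D} :=
    (by fun_prop : Measurable fun r : ℝ => x + r • v) hD
  rw [lineMass, ← lintegral_indicator hmeas]
  congr 1 with r
  by_cases h : x + r • v ∈ D <;> simp [h]

variable [SecondCountableTopology E]

theorem measurable_lineMass (v : E) {f : ℝ → ℝ≥0∞} (hf : Measurable f) {D : Set E}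
    (hD : MeasurableSet D) : Measurable (lineMass v f D) := by
  simp_rw [funext (lineMass_eq_lintegral_indicator v f hD)]
  refine Measurable.lintegral_prod_right'
    (f := fun p : E × ℝ => D.indicator 1 (p.1 + p.2 • v) * f p.2) ?_
  exact ((measurable_one.indicator hD).comp (by fun_prop)).mul (hf.comp measurable_snd)

theorem measurable_lazyLineKernel (v : E) {f : ℝ → ℝ≥0∞} (hf : Measurable f) {S C : Set E}
    (hS : MeasurableSet S) (hC : MeasurableSet C) : Measurable (lazyLineKernel v f S C) :=
  ((measurable_lineMass v hf (hS.inter hC)).const_mul _).add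
    ((measurable_const.sub ((measurable_lineMass v hf hS).const_mul _)).indicator hC)

variable (μ : Measure E)

theorem setLIntegral_lineMass [SFinite μ] (v : E) {f : ℝ → ℝ≥0∞} (hf : Measurable f)
    (C : Set E) {D : Set E} (hD : MeasurableSet D) :
    ∫⁻ x in C, lineMass v f D x ∂μ = ∫⁻ r, μ (C ∩ (· + r • v) ⁻¹' D) * f r := by
  simp_rw [lineMass_eq_lintegral_indicator v f hD]
  rw [lintegral_lintegral_swap]
  · congr 1 with r
    have hpre : MeasurableSet ((· + r • v) ⁻¹' D) := (by fun_prop : Measurable (· + r • v)) hD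
    have hind : Measurable fun x => D.indicator (1 : E → ℝ≥0∞) (x + r • v) :=
      (measurable_one.indicator hD).comp (by fun_prop)
    rw [lintegral_mul_const _ hind,
      inter_comm, ← Measure.restrict_apply hpre, ← lintegral_indicator_one hpre]
    rfl
  · exact (((measurable_one.indicator hD).comp (by fun_prop)).mul
      (hf.comp measurable_snd)).aemeasurable

theorem setLIntegral_lineMass_comm [SFinite μ] [μ.IsAddRightInvariant] (v : E) {f : ℝ → ℝ≥0∞}
    (hf : Measurable f) (hf_even : ∀ r, f (-r) = f r) {C D : Set E} (hC : MeasurableSet C)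
    (hD : MeasurableSet D) :
    ∫⁻ x in C, lineMass v f D x ∂μ = ∫⁻ x in D, lineMass v f C x ∂μ := by
  rw [setLIntegral_lineMass μ v hf C hD, setLIntegral_lineMass μ v hf D hC,
    ← lintegral_neg_eq_self (fun r => μ (D ∩ (· + r • v) ⁻¹' C) * f r)]
  congr 1 with r
  rw [hf_even, ← measure_preimage_add_right μ (r • v) (D ∩ _)]
  congr 2 with x
  simp [and_comm]

theorem setLIntegral_lazyLineKernel (v : E) {f : ℝ → ℝ≥0∞} (hf : Measurable f) {S A B : Set E}
    (hS : MeasurableSet S) (hB : MeasurableSet B) :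
    ∫⁻ x in A ∩ S, lazyLineKernel v f S B x ∂μ =
      2⁻¹ * ∫⁻ x in A ∩ S, lineMass v f (S ∩ B) x ∂μ +
        ∫⁻ x in B ∩ (A ∩ S), 1 - 2⁻¹ * lineMass v f S x ∂μ := by
  have hmass := measurable_lineMass v hf (hS.inter hB)
  simp only [lazyLineKernel]
  rw [lintegral_add_left (hmass.const_mul _), lintegral_const_mul _ hmass, lintegral_indicator hB,
    Measure.restrict_restrict hB]

theorem setLIntegral_lazyLineKernel_comm [SFinite μ] [μ.IsAddRightInvariant] (v : E)
    {f : ℝ → ℝ≥0∞} (hf : Measurable f) (hf_even : ∀ r, f (-r) = f r) {S A B : Set E}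
    (hS : MeasurableSet S) (hA : MeasurableSet A) (hB : MeasurableSet B) :
    ∫⁻ x in A ∩ S, lazyLineKernel v f S B x ∂μ = ∫⁻ x in B ∩ S, lazyLineKernel v f S A x ∂μ := by
  rw [setLIntegral_lazyLineKernel μ v hf hS hB, setLIntegral_lazyLineKernel μ v hf hS hA,
    setLIntegral_lineMass_comm μ v hf hf_even (hA.inter hS) (hS.inter hB), inter_comm S B,
    inter_comm S A, inter_left_comm]

end LineMass

section Radial

variable {E F : Type*} [NormedAddCommGroup E] [NormedSpace ℝ E]

def IsRadial (q : E → F) : Prop :=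
  ∀ r : ℝ, 0 < r → ∀ θ₁ θ₂ : E, ‖θ₁‖ = 1 → ‖θ₂‖ = 1 → q (r • θ₁) = q (r • θ₂)

theorem IsRadial.apply_eq_apply_norm_smul {q : E → F} (hq : IsRadial q) {v : E} (hv : ‖v‖ = 1)
    (z : E) : q z = q (‖z‖ • v) := by
  rcases eq_or_ne z 0 with rfl | hz
  · simp
  have hz' : ‖z‖ ≠ 0 := norm_ne_zero_iff.2 hz
  calc q z = q (‖z‖ • ‖z‖⁻¹ • z) := by rw [smul_inv_smul₀ hz']
    _ = q (‖z‖ • v) := hq _ (norm_pos_iff.2 hz) _ _ (by simp [norm_smul, hz']) hv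

theorem IsRadial.integral_eq_integral_Ioi [NormedAddCommGroup F] [NormedSpace ℝ F]
    [FiniteDimensional ℝ E] [MeasurableSpace E] [BorelSpace E] (μ : Measure E)
    [μ.IsAddHaarMeasure] {q : E → F} (hq : IsRadial q) {v : E} (hv : ‖v‖ = 1) :
    ∫ z, q z ∂μ = Module.finrank ℝ E • μ.real (Metric.ball 0 1) •
      ∫ y in Ioi (0 : ℝ), y ^ (Module.finrank ℝ E - 1) • q (y • v) := by
  have : Nontrivial E := nontrivial_of_ne v 0 (by rintro rfl; simp at hv)
  rw [← integral_fun_norm_addHaar μ (fun y => q (y • v))]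
  exact integral_congr_ae (ae_of_all _ (hq.apply_eq_apply_norm_smul hv))

end Radial

section Eta

theorem eta_self_add (q : EuclideanSpace ℝ (Fin d) → ℝ) (x y : EuclideanSpace ℝ (Fin d)) :
    eta d q x (x + y) = eta d q 0 y := by
  simp [eta]

variable {q : EuclideanSpace ℝ (Fin d) → ℝ} (hq : IsRadial q) {v : EuclideanSpace ℝ (Fin d)}
  (hv : ‖v‖ = 1)
include hq hv

theorem eta_zero_smul_abs (r : ℝ) : eta d q 0 (r • v) = eta d q 0 (|r| • v) := by
  have hnorm (s : ℝ) : ‖s • v‖ = |s| := by rw [norm_smul, hv, mul_one, Real.norm_eq_abs]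
  simp only [eta, sub_zero, hnorm, abs_abs, hq.apply_eq_apply_norm_smul hv (r • v)]

theorem integral_eta_zero_smul : ∫ r : ℝ, eta d q 0 (r • v) = ∫ z, q z := by
  have hIoi : ∀ y ∈ Ioi (0 : ℝ), eta d q 0 (y • v) =
      d * (volume (Metric.ball (0 : EuclideanSpace ℝ (Fin d)) 1)).toReal / 2 *
        (y ^ (d - 1) * q (y • v)) := fun y hy => by
    rw [eta, sub_zero, norm_smul, hv, mul_one, Real.norm_eq_abs, abs_of_pos hy]
    ring
  calc ∫ r : ℝ, eta d q 0 (r • v) = ∫ r : ℝ, eta d q 0 (|r| • v) :=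
        integral_congr_ae (ae_of_all _ (eta_zero_smul_abs hq hv))
    _ = 2 * ∫ y in Ioi (0 : ℝ), eta d q 0 (y • v) :=
      integral_comp_abs (f := fun y => eta d q 0 (y • v))
    _ = d * (volume (Metric.ball (0 : EuclideanSpace ℝ (Fin d)) 1)).toReal *
          ∫ y in Ioi (0 : ℝ), y ^ (d - 1) * q (y • v) := by
      rw [setIntegral_congr_fun measurableSet_Ioi hIoi, integral_const_mul]
      ring
    _ = ∫ z, q z := by
      rw [hq.integral_eq_integral_Ioi volume hv, finrank_euclideanSpace_fin]
      simp only [nsmul_eq_mul, smul_eq_mul, mul_assoc, measureReal_def]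

end Eta

theorem lazyLineMetropolis_reversible_general
    (K : Set (EuclideanSpace ℝ (Fin d))) (hK : MeasurableSet K)
    (ρ : EuclideanSpace ℝ (Fin d) → ℝ) (hρ_meas : Measurable ρ)
    (q : EuclideanSpace ℝ (Fin d) → ℝ) (hq_meas : Measurable q)
    (hq_nonneg : ∀ z, 0 ≤ q z) (hq_prob : ∫ z, q z ∂volume = 1)
    (hq_rot : ∀ r : ℝ, 0 < r → ∀ θ₁ θ₂ : EuclideanSpace ℝ (Fin d),
      ‖θ₁‖ = 1 → ‖θ₂‖ = 1 → q (r • θ₁) = q (r • θ₂))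
    (a₁ : EuclideanSpace ℝ (Fin d)) (ha₁ : ‖a₁‖ = 1) (a₂ : ℝ)
    (A B : Set (EuclideanSpace ℝ (Fin d))) (hA : MeasurableSet A) (hB : MeasurableSet B) :
    ∫ x in A ∩ {z | z ∈ K ∧ a₂ < ρ z}, lazyLineMetropolis K ρ q a₁ a₂ x B ∂volume
      = ∫ x in B ∩ {z | z ∈ K ∧ a₂ < ρ z}, lazyLineMetropolis K ρ q a₁ a₂ x A ∂volume := by
  set S := {z | z ∈ K ∧ a₂ < ρ z}
  have hS : MeasurableSet S := hK.inter (hρ_meas measurableSet_Ioi)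
  set F : ℝ → ℝ := fun r => eta d q 0 (r • a₁)
  have hF_meas : Measurable F := by simp only [F, eta]; fun_prop
  have hF_nonneg : ∀ r, 0 ≤ F r := fun r =>
    mul_nonneg (mul_nonneg (by positivity) (hq_nonneg _)) (by positivity)
  have hF_even : ∀ r, F (-r) = F r := fun r => by
    simp only [F, eta_zero_smul_abs hq_rot ha₁ (-r), eta_zero_smul_abs hq_rot ha₁ r, abs_neg]
  have hF_mass : ∫⁻ r, ENNReal.ofReal (F r) = 1 := by
    have hF_int : ∫ r, F r = 1 := (integral_eta_zero_smul hq_rot ha₁).trans hq_prob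
    rw [← ofReal_integral_eq_lintegral_ofReal (.of_integral_ne_zero (by simp [hF_int]))
      (ae_of_all _ hF_nonneg), hF_int, ENNReal.ofReal_one]
  set N := lazyLineKernel a₁ (fun r => ENNReal.ofReal (F r)) S
  have hM : ∀ C x, lazyLineMetropolis K ρ q a₁ a₂ x C = (N C x).toReal := fun C x => by
    rw [toReal_lazyLineKernel a₁ hF_meas hF_nonneg (by rw [hF_mass]; norm_num)]
    simp only [lazyLineMetropolis, eta_self_add, F, S, mem_inter_iff, mem_ofPred_eq,
      and_assoc]
  have hN : ∀ P C, MeasurableSet C →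
      ∫ x in P ∩ S, lazyLineMetropolis K ρ q a₁ a₂ x C = (∫⁻ x in P ∩ S, N C x).toReal :=
    fun P C hC => by
      simp only [hM]
      exact integral_toReal (measurable_lazyLineKernel a₁ (by fun_prop) hS hC).aemeasurable
        (ae_of_all _ (lazyLineKernel_lt_top a₁ (by simp [hF_mass]) S C))
  rw [hN A B hB, hN B A hA, setLIntegral_lazyLineKernel_comm volume a₁ (by fun_prop)
    (fun r => by simp only [hF_even]) hS hA hB]

/-- the lazy line-restricted Metropolis kernel `M_a` is reversible with
respect to the uniform distribution on the level set `K(a₂)`: for all measurable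
`A, B ⊆ K`, `∫_{A ∩ K(a₂)} M_a(x,B) dx = ∫_{B ∩ K(a₂)} M_a(x,A) dx`. -/
theorem lazyLineMetropolis_reversible (hd : 0 < d)
    (K : Set (EuclideanSpace ℝ (Fin d))) (hK : MeasurableSet K)
    (ρ : EuclideanSpace ℝ (Fin d) → ℝ) (hρ_meas : Measurable ρ)
    (hρ_pos : ∀ x ∈ K, 0 < ρ x) (hρ_int : IntegrableOn ρ K)
    (q : EuclideanSpace ℝ (Fin d) → ℝ) (hq_meas : Measurable q)
    (hq_nonneg : ∀ z, 0 ≤ q z) (hq_prob : ∫ z, q z ∂volume = 1)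
    (hq_rot : ∀ r : ℝ, 0 < r → ∀ θ₁ θ₂ : EuclideanSpace ℝ (Fin d),
      ‖θ₁‖ = 1 → ‖θ₂‖ = 1 → q (r • θ₁) = q (r • θ₂))
    (a₁ : EuclideanSpace ℝ (Fin d)) (ha₁ : ‖a₁‖ = 1) (a₂ : ℝ) (ha₂ : 0 ≤ a₂)
    (A B : Set (EuclideanSpace ℝ (Fin d))) (hA : MeasurableSet A) (hB : MeasurableSet B)
    (hAK : A ⊆ K) (hBK : B ⊆ K) :
    ∫ x in A ∩ {z | z ∈ K ∧ a₂ < ρ z}, lazyLineMetropolis K ρ q a₁ a₂ x B ∂volume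
      = ∫ x in B ∩ {z | z ∈ K ∧ a₂ < ρ z}, lazyLineMetropolis K ρ q a₁ a₂ x A ∂volume :=
  lazyLineMetropolis_reversible_general K hK ρ hρ_meas q hq_meas hq_nonneg hq_prob hq_rot a₁ ha₁ a₂
    A B hA hB

end LazyLineMetropolisReversible
end
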